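/- Assume a_1 ≠ 0 and b ∈ ℝ, and consider on ℝ³ × ℝ³ the periodic three-particle Toda Hamiltonian H = ½(p_1²+p_2²+p_3²) + a_1e^{q_1−q_2} + a_2e^{q_2−q_3} + a_3e^{q_3−q_1}. Define the three functions P = p_1 + p_2 + p_3, H̃ = e^{q_2−q_1}(H + b), and K̃ = −p_1p_2p_3 + a_1e^{q_1−q_2}p_3 + a_2e^{q_2−q_3}p_1 + a_3e^{q_3−q_1}p_2 − (H+b)p_3. Then P, H̃ and K̃ are pairwise in involution with respect to the canonical Poisson bracket: {P, H̃} = {P, K̃} = {H̃, K̃} = 0 at every point of ℝ³ × ℝ³. (These are the integrals of motion of the integrable system obtained from the Toda lattice by the canonical change of time dt̃ = e^{q_1−q_2}dt.) -/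

import Mathlib

/-!
The total momentum `P` generates the simultaneous translation `q ↦ q + t (1,1,1)`: `{P, g}` is the
derivative of `g` along it. Both `H̃` and `K̃` depend on `q` only through the differences `qᵢ - qⱼ`,
so they Poisson-commute with `P`. The remaining bracket `{H̃, K̃}` is computed from explicit gradients;
with `p` and the exponentials `e^{qᵢ - qⱼ}` treated as independent indeterminates, it vanishes
identically as a polynomial.
-/

open Real

/-- The canonical Poisson bracket on the phase space `(Fin 3 → ℝ) × (Fin 3 → ℝ)`
with coordinates `(p, q)`. -/
noncomputable def pbracket (f g : (Fin 3 → ℝ) × (Fin 3 → ℝ) → ℝ)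
    (z : (Fin 3 → ℝ) × (Fin 3 → ℝ)) : ℝ :=
  ∑ i : Fin 3,
    (fderiv ℝ f z (Pi.single i 1, 0) * fderiv ℝ g z (0, Pi.single i 1)
      - fderiv ℝ f z (0, Pi.single i 1) * fderiv ℝ g z (Pi.single i 1, 0))

/-- The periodic three-particle Toda Hamiltonian. -/
noncomputable def todaH (a1 a2 a3 : ℝ) (z : (Fin 3 → ℝ) × (Fin 3 → ℝ)) : ℝ :=
  (1 / 2) * ((z.1 0) ^ 2 + (z.1 1) ^ 2 + (z.1 2) ^ 2)
    + a1 * exp (z.2 0 - z.2 1) + a2 * exp (z.2 1 - z.2 2)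
    + a3 * exp (z.2 2 - z.2 0)

abbrev PhaseSpace := (Fin 3 → ℝ) × (Fin 3 → ℝ)

theorem fderiv_apply_eq_zero_of_forall_add_smul {𝕜 E F : Type*} [NontriviallyNormedField 𝕜]
    [NormedAddCommGroup E] [NormedSpace 𝕜 E] [NormedAddCommGroup F] [NormedSpace 𝕜 F]
    {f : E → F} {x v : E} (hf : ∀ t : 𝕜, f (x + t • v) = f x) : fderiv 𝕜 f x v = 0 := by
  by_cases hd : DifferentiableAt 𝕜 f x
  · rw [← hd.lineDeriv_eq_fderiv, lineDeriv, funext hf, deriv_const]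
  · rw [fderiv_zero_of_not_differentiableAt hd, zero_apply]

/-- A derivative of this form records the gradient `(α, β) = (∂_p f, ∂_q f)`. -/
noncomputable def phaseCovector (α β : Fin 3 → ℝ) : PhaseSpace →L[ℝ] ℝ :=
  ∑ i, (α i • (ContinuousLinearMap.proj i).comp (ContinuousLinearMap.fst ℝ _ _)
    + β i • (ContinuousLinearMap.proj i).comp (ContinuousLinearMap.snd ℝ _ _))

theorem phaseCovector_apply (α β : Fin 3 → ℝ) (v : PhaseSpace) :
    phaseCovector α β v = ∑ i, (α i * v.1 i + β i * v.2 i) := by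
  simp [phaseCovector]

theorem pbracket_eq_of_hasFDerivAt {f g : PhaseSpace → ℝ} {z : PhaseSpace} {α β γ δ : Fin 3 → ℝ}
    (hf : HasFDerivAt f (phaseCovector α β) z) (hg : HasFDerivAt g (phaseCovector γ δ) z) :
    pbracket f g z = ∑ i, (α i * δ i - β i * γ i) := by
  simp [pbracket, hf.fderiv, hg.fderiv, phaseCovector_apply, Pi.single_apply]

theorem pbracket_totalMomentum (g : PhaseSpace → ℝ) (z : PhaseSpace) :
    pbracket (fun w => w.1 0 + w.1 1 + w.1 2) g z = fderiv ℝ g z (0, 1) := by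
  have hP : ⇑(phaseCovector 1 0) = fun w => w.1 0 + w.1 1 + w.1 2 := by
    ext w; simp [phaseCovector_apply, Fin.sum_univ_three]
  have h1 : ((0 : Fin 3 → ℝ), (1 : Fin 3 → ℝ)) = ∑ i : Fin 3, (0, Pi.single i 1) := by
    ext1
    · simp [Prod.fst_sum]
    · simpa [Prod.snd_sum] using (Finset.univ_sum_single (1 : Fin 3 → ℝ)).symm
  rw [← hP, pbracket, (phaseCovector 1 0).fderiv, h1, map_sum]
  simp [phaseCovector_apply, Pi.single_apply]

theorem hasFDerivAt_momentum (i : Fin 3) (z : PhaseSpace) :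
    HasFDerivAt (fun w : PhaseSpace => w.1 i) (phaseCovector (Pi.single i 1) 0) z := by
  have h : ⇑(phaseCovector (Pi.single i 1) 0) = fun w => w.1 i := by
    ext w; simp [phaseCovector_apply, Pi.single_apply]
  exact h ▸ (phaseCovector _ _).hasFDerivAt

theorem hasFDerivAt_position (i : Fin 3) (z : PhaseSpace) :
    HasFDerivAt (fun w : PhaseSpace => w.2 i) (phaseCovector 0 (Pi.single i 1)) z := by
  have h : ⇑(phaseCovector 0 (Pi.single i 1)) = fun w => w.2 i := by
    ext w; simp [phaseCovector_apply, Pi.single_apply]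
  exact h ▸ (phaseCovector _ _).hasFDerivAt

section Toda

variable (a1 a2 a3 b : ℝ)

noncomputable def todaPotentialGrad (q : Fin 3 → ℝ) : Fin 3 → ℝ :=
  ![a1 * exp (q 0 - q 1) - a3 * exp (q 2 - q 0),
    a2 * exp (q 1 - q 2) - a1 * exp (q 0 - q 1),
    a3 * exp (q 2 - q 0) - a2 * exp (q 1 - q 2)]

/-- Minus the classical cubic integral of the Toda lattice. -/
noncomputable def todaK (z : PhaseSpace) : ℝ :=
  -(z.1 0 * z.1 1 * z.1 2)
    + a1 * exp (z.2 0 - z.2 1) * z.1 2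
    + a2 * exp (z.2 1 - z.2 2) * z.1 0
    + a3 * exp (z.2 2 - z.2 0) * z.1 1

noncomputable def todaKGradP (z : PhaseSpace) : Fin 3 → ℝ :=
  ![-(z.1 1 * z.1 2) + a2 * exp (z.2 1 - z.2 2),
    -(z.1 0 * z.1 2) + a3 * exp (z.2 2 - z.2 0),
    -(z.1 0 * z.1 1) + a1 * exp (z.2 0 - z.2 1)]

noncomputable def todaKGradQ (z : PhaseSpace) : Fin 3 → ℝ :=
  ![a1 * exp (z.2 0 - z.2 1) * z.1 2 - a3 * exp (z.2 2 - z.2 0) * z.1 1,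
    a2 * exp (z.2 1 - z.2 2) * z.1 0 - a1 * exp (z.2 0 - z.2 1) * z.1 2,
    a3 * exp (z.2 2 - z.2 0) * z.1 1 - a2 * exp (z.2 1 - z.2 2) * z.1 0]

noncomputable def todaHtilde (z : PhaseSpace) : ℝ :=
  exp (z.2 1 - z.2 0) * (todaH a1 a2 a3 z + b)

noncomputable def todaKtilde (z : PhaseSpace) : ℝ :=
  todaK a1 a2 a3 z - (todaH a1 a2 a3 z + b) * z.1 2

theorem todaHtilde_add_smul (z : PhaseSpace) (t : ℝ) :
    todaHtilde a1 a2 a3 b (z + t • (0, 1)) = todaHtilde a1 a2 a3 b z := by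
  simp [todaHtilde, todaH]

theorem todaKtilde_add_smul (z : PhaseSpace) (t : ℝ) :
    todaKtilde a1 a2 a3 b (z + t • (0, 1)) = todaKtilde a1 a2 a3 b z := by
  simp [todaKtilde, todaK, todaH]

variable (z : PhaseSpace)

theorem hasFDerivAt_todaH :
    HasFDerivAt (todaH a1 a2 a3) (phaseCovector z.1 (todaPotentialGrad a1 a2 a3 z.2)) z := by
  have hp := fun i => hasFDerivAt_momentum i z
  have hq := fun i => hasFDerivAt_position i z
  have : HasFDerivAt (todaH a1 a2 a3) _ z :=
    (((((hp 0).pow 2).add ((hp 1).pow 2)).add ((hp 2).pow 2)).const_mul (1 / 2)).add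
      (((hq 0).sub (hq 1)).exp.const_mul a1) |>.add (((hq 1).sub (hq 2)).exp.const_mul a2) |>.add
      (((hq 2).sub (hq 0)).exp.const_mul a3)
  refine this.congr_fderiv (ContinuousLinearMap.ext fun v => ?_)
  simp only [phaseCovector_apply, Fin.sum_univ_three, todaPotentialGrad, add_apply, sub_apply,
    smul_apply, smul_eq_mul, Pi.sub_apply, Pi.zero_apply, Pi.single_apply, Matrix.cons_val,
    Fin.isValue, Fin.reduceEq, ↓reduceIte]
  ring

theorem hasFDerivAt_todaK :
    HasFDerivAt (todaK a1 a2 a3)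
      (phaseCovector (todaKGradP a1 a2 a3 z) (todaKGradQ a1 a2 a3 z)) z := by
  have hp := fun i => hasFDerivAt_momentum i z
  have hq := fun i => hasFDerivAt_position i z
  have : HasFDerivAt (todaK a1 a2 a3) _ z :=
    ((((hp 0).mul (hp 1)).mul (hp 2)).neg.add
      ((((hq 0).sub (hq 1)).exp.const_mul a1).mul (hp 2))).add
      ((((hq 1).sub (hq 2)).exp.const_mul a2).mul (hp 0)) |>.add
      ((((hq 2).sub (hq 0)).exp.const_mul a3).mul (hp 1))
  refine this.congr_fderiv (ContinuousLinearMap.ext fun v => ?_)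
  simp only [phaseCovector_apply, todaKGradP, todaKGradQ, Fin.sum_univ_three, add_apply, sub_apply,
    neg_apply, smul_apply, smul_eq_mul, Pi.sub_apply, Pi.mul_apply, Pi.zero_apply, Pi.single_apply,
    Matrix.cons_val, Fin.isValue, Fin.reduceEq, ↓reduceIte]
  ring

theorem hasFDerivAt_todaHtilde :
    HasFDerivAt (todaHtilde a1 a2 a3 b) (phaseCovector (exp (z.2 1 - z.2 0) • z.1)
      (exp (z.2 1 - z.2 0) • todaPotentialGrad a1 a2 a3 z.2
        + todaHtilde a1 a2 a3 b z • ![-1, 1, 0])) z := by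
  have hq := fun i => hasFDerivAt_position i z
  have : HasFDerivAt (todaHtilde a1 a2 a3 b) _ z :=
    ((hq 1).sub (hq 0)).exp.mul ((hasFDerivAt_todaH a1 a2 a3 z).add_const b)
  refine this.congr_fderiv (ContinuousLinearMap.ext fun v => ?_)
  simp only [phaseCovector_apply, Fin.sum_univ_three, todaPotentialGrad, todaHtilde, todaH,
    add_apply, sub_apply, smul_apply, smul_eq_mul, Pi.add_apply, Pi.sub_apply, Pi.smul_apply,
    Pi.zero_apply, Pi.single_apply, Matrix.cons_val, Fin.isValue, Fin.reduceEq, ↓reduceIte]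
  ring

theorem hasFDerivAt_todaKtilde :
    HasFDerivAt (todaKtilde a1 a2 a3 b) (phaseCovector
      (todaKGradP a1 a2 a3 z - z.1 2 • z.1 - (todaH a1 a2 a3 z + b) • Pi.single 2 1)
      (todaKGradQ a1 a2 a3 z - z.1 2 • todaPotentialGrad a1 a2 a3 z.2)) z := by
  have : HasFDerivAt (todaKtilde a1 a2 a3 b) _ z :=
    (hasFDerivAt_todaK a1 a2 a3 z).sub
      (((hasFDerivAt_todaH a1 a2 a3 z).add_const b).mul (hasFDerivAt_momentum 2 z))
  refine this.congr_fderiv (ContinuousLinearMap.ext fun v => ?_)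
  simp only [phaseCovector_apply, Fin.sum_univ_three, add_apply, sub_apply, smul_apply, smul_eq_mul,
    Pi.sub_apply, Pi.smul_apply, Pi.zero_apply, Pi.single_apply, Fin.isValue, Fin.reduceEq,
    ↓reduceIte]
  ring

theorem pbracket_todaHtilde_todaKtilde :
    pbracket (todaHtilde a1 a2 a3 b) (todaKtilde a1 a2 a3 b) z = 0 := by
  rw [pbracket_eq_of_hasFDerivAt (hasFDerivAt_todaHtilde a1 a2 a3 b z)
    (hasFDerivAt_todaKtilde a1 a2 a3 b z)]
  simp only [Fin.sum_univ_three, todaPotentialGrad, todaKGradP, todaKGradQ, todaHtilde, todaH,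
    smul_eq_mul, Pi.add_apply, Pi.sub_apply, Pi.smul_apply, Pi.single_apply, Matrix.cons_val,
    Fin.isValue, Fin.reduceEq, ↓reduceIte]
  ring

end Toda

theorem stmt_19_general (a1 a2 a3 b : ℝ)
    (P Ht Kt : (Fin 3 → ℝ) × (Fin 3 → ℝ) → ℝ)
    (hP : ∀ z, P z = z.1 0 + z.1 1 + z.1 2)
    (hHt : ∀ z, Ht z = exp (z.2 1 - z.2 0) * (todaH a1 a2 a3 z + b))
    (hKt : ∀ z, Kt z =
      -(z.1 0 * z.1 1 * z.1 2)
        + a1 * exp (z.2 0 - z.2 1) * z.1 2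
        + a2 * exp (z.2 1 - z.2 2) * z.1 0
        + a3 * exp (z.2 2 - z.2 0) * z.1 1
        - (todaH a1 a2 a3 z + b) * z.1 2) :
    ∀ z : (Fin 3 → ℝ) × (Fin 3 → ℝ),
      pbracket P Ht z = 0 ∧ pbracket P Kt z = 0 ∧ pbracket Ht Kt z = 0 := by
  obtain rfl : P = fun z => z.1 0 + z.1 1 + z.1 2 := funext hP
  obtain rfl : Ht = todaHtilde a1 a2 a3 b := funext hHt
  obtain rfl : Kt = todaKtilde a1 a2 a3 b := funext hKt
  intro z
  refine ⟨?_, ?_, pbracket_todaHtilde_todaKtilde a1 a2 a3 b z⟩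
  · rw [pbracket_totalMomentum]
    exact fderiv_apply_eq_zero_of_forall_add_smul (todaHtilde_add_smul a1 a2 a3 b z)
  · rw [pbracket_totalMomentum]
    exact fderiv_apply_eq_zero_of_forall_add_smul (todaKtilde_add_smul a1 a2 a3 b z)

/-- the total momentum `P = p₁+p₂+p₃`, the transformed
Hamiltonian `H̃ = e^{q₂−q₁}(H+b)`, and
`K̃ = −p₁p₂p₃ + a₁e^{q₁−q₂}p₃ + a₂e^{q₂−q₃}p₁ + a₃e^{q₃−q₁}p₂ − (H+b)p₃`
are pairwise in involution on all of phase space. -/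
theorem stmt_19 (a1 a2 a3 b : ℝ) (ha1 : a1 ≠ 0)
    (P Ht Kt : (Fin 3 → ℝ) × (Fin 3 → ℝ) → ℝ)
    (hP : ∀ z, P z = z.1 0 + z.1 1 + z.1 2)
    (hHt : ∀ z, Ht z = exp (z.2 1 - z.2 0) * (todaH a1 a2 a3 z + b))
    (hKt : ∀ z, Kt z =
      -(z.1 0 * z.1 1 * z.1 2)
        + a1 * exp (z.2 0 - z.2 1) * z.1 2
        + a2 * exp (z.2 1 - z.2 2) * z.1 0
        + a3 * exp (z.2 2 - z.2 0) * z.1 1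
        - (todaH a1 a2 a3 z + b) * z.1 2) :
    ∀ z : (Fin 3 → ℝ) × (Fin 3 → ℝ),
      pbracket P Ht z = 0 ∧ pbracket P Kt z = 0 ∧ pbracket Ht Kt z = 0 :=
  stmt_19_general a1 a2 a3 b P Ht Kt hP hHt hKt
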